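/- arXiv:1405.4132 — 6 statements merged into one kernel-verified Lean document; each statement's English description precedes it below -/
import Mathlib

section
/- Let T be a tree and let e, f be two distinct edges of T. Let T_e be a component of T − e and T_f a component of T − f, and suppose |V(T_e)| + |V(T_f)| ≤ |V(T)|. Then either T_e ⊆ T_f, or T_f ⊆ T_e, or T_e and T_f are vertex-disjoint. -/
/-!
Call a vertex set closed for `H` if it is a union of connected components of `H`. Let `X` be
closed for `G - e` and avoid both endpoints of `f`, and let `Y` be closed for `G - f` and avoid
both endpoints of `e`. Then `X` and `Y` are disjoint as soon as `G` is connected: a walk from a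
common vertex to an endpoint of `f` must pass through `e` before leaving `X`, and the part of
the walk before `e` must pass through `f` before leaving `Y`, so it reaches an endpoint of `f`
inside `X`.

Since `e ≠ f` are edges, the endpoints of `f` lie on one side of the component `A` of `G - e`,
and those of `e` on one side of `B`. Applying the above to the sides avoiding them makes one of
`A ∩ B`, `A \ B`, `B \ A`, `(A ∪ B)ᶜ` empty; in the last case `A ∪ B` is everything, and the
cardinality bound forces `A ∩ B = ∅`.
-/

namespace SimpleGraph

variable {V : Type*} {G H : SimpleGraph V}

def IsReachableClosed (H : SimpleGraph V) (X : Set V) : Prop :=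
  ∀ ⦃x y⦄, H.Reachable x y → x ∈ X → y ∈ X

theorem IsReachableClosed.compl {X : Set V} (hX : H.IsReachableClosed X) :
    H.IsReachableClosed Xᶜ :=
  fun _ _ hxy hx hy => hx (hX hxy.symm hy)

theorem ConnectedComponent.isReachableClosed_supp (C : H.ConnectedComponent) :
    H.IsReachableClosed C.supp := by
  intro x y hxy hx
  rw [ConnectedComponent.mem_supp_iff] at hx ⊢
  rw [← hx, ConnectedComponent.eq]
  exact hxy.symm

theorem Reachable.deleteEdges_or {x y : V} (h : G.Reachable x y) (e : Sym2 V) :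
    (G.deleteEdges {e}).Reachable x y ∨ ∃ z ∈ e, (G.deleteEdges {e}).Reachable x z := by
  obtain ⟨p⟩ := h
  induction p with
  | nil => exact Or.inl (Reachable.refl _)
  | @cons a b _ hab _ ih =>
    by_cases hae : s(a, b) = e
    · exact Or.inr ⟨a, hae ▸ Sym2.mem_mk_left a b, Reachable.refl _⟩
    · have hab' : (G.deleteEdges {e}).Adj a b := (deleteEdges_adj ..).mpr ⟨hab, hae⟩
      exact ih.imp hab'.reachable.trans
        fun ⟨z, hz, hbz⟩ => ⟨z, hz, hab'.reachable.trans hbz⟩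

theorem IsReachableClosed.forall_notMem_or_forall_notMem_compl {e f : Sym2 V} {X : Set V}
    (hX : (G.deleteEdges {e}).IsReachableClosed X) (hf : f ∈ G.edgeSet) (hef : e ≠ f) :
    (∀ w ∈ f, w ∉ X) ∨ ∀ w ∈ f, w ∉ Xᶜ := by
  induction f using Sym2.ind with
  | _ a b =>
  have hab : (G.deleteEdges {e}).Adj a b := (deleteEdges_adj ..).mpr ⟨hf, Ne.symm hef⟩
  simp only [Sym2.mem_iff, forall_eq_or_imp, forall_eq, Set.mem_compl_iff, not_not]
  by_cases ha : a ∈ X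
  · exact Or.inr ⟨ha, hX hab.reachable ha⟩
  · exact Or.inl ⟨ha, fun hb => ha (hX hab.reachable.symm hb)⟩

theorem Preconnected.disjoint_of_isReachableClosed (hG : G.Preconnected) {e f : Sym2 V}
    {X Y : Set V} (hX : (G.deleteEdges {e}).IsReachableClosed X)
    (hY : (G.deleteEdges {f}).IsReachableClosed Y)
    (hfX : ∀ w ∈ f, w ∉ X) (heY : ∀ z ∈ e, z ∉ Y) : Disjoint X Y := by
  refine Set.disjoint_left.mpr fun x hxX hxY => ?_
  rcases (hG x f.out.1).deleteEdges_or e with hxw | ⟨z, hz, hxz⟩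
  · exact hfX _ f.out_fst_mem (hX hxw hxX)
  have hle : (G.deleteEdges {e}).deleteEdges {f} ≤ G.deleteEdges {f} :=
    deleteEdges_mono (deleteEdges_le _)
  rcases hxz.deleteEdges_or f with hxz' | ⟨w, hw, hxw⟩
  · exact heY z hz (hY (hxz'.mono hle) hxY)
  · exact hfX w hw (hX (hxw.mono (deleteEdges_le _)) hxX)

end SimpleGraph

theorem Set.disjoint_of_disjoint_compl_of_ncard_add_le {α : Type*} [Fintype α] {A B : Set α}
    (h : Disjoint Aᶜ Bᶜ) (hcard : A.ncard + B.ncard ≤ Fintype.card α) : Disjoint A B := by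
  have hunion : A ∪ B = Set.univ :=
    codisjoint_iff.mp (codisjoint_iff_compl_le_right.mpr (compl_compl B ▸ h.le_compl_right))
  have hsum := Set.ncard_union_add_ncard_inter A B
  rw [hunion, Set.ncard_univ, Nat.card_eq_fintype_card] at hsum
  rw [Set.disjoint_iff_inter_eq_empty, ← Set.ncard_eq_zero]
  omega

/-- Let `T` be a tree and `e ≠ f` two edges. If `T_e` is a component of
`T − e` and `T_f` a component of `T − f` with `|V(T_e)| + |V(T_f)| ≤ |V(T)|`, then
`T_e ⊆ T_f`, `T_f ⊆ T_e`, or they are vertex-disjoint. -/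
theorem stmt_0 {V : Type} [Fintype V] (G : SimpleGraph V) (hG : G.IsTree)
    (e f : Sym2 V) (he : e ∈ G.edgeSet) (hf : f ∈ G.edgeSet) (hef : e ≠ f)
    (A B : Set V)
    (hA : ∃ c : (G.deleteEdges {e}).ConnectedComponent, A = c.supp)
    (hB : ∃ c : (G.deleteEdges {f}).ConnectedComponent, B = c.supp)
    (hcard : A.ncard + B.ncard ≤ Fintype.card V) :
    A ⊆ B ∨ B ⊆ A ∨ Disjoint A B := by
  obtain ⟨C, rfl⟩ := hA
  obtain ⟨D, rfl⟩ := hB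
  have hC := C.isReachableClosed_supp
  have hD := D.isReachableClosed_supp
  have hconn := hG.1.preconnected
  rcases hC.forall_notMem_or_forall_notMem_compl hf hef with hfC | hfC <;>
    rcases hD.forall_notMem_or_forall_notMem_compl he hef.symm with heD | heD
  · exact Or.inr (Or.inr (hconn.disjoint_of_isReachableClosed hC hD hfC heD))
  · exact Or.inl <| Set.disjoint_compl_right_iff_subset.mp <|
      hconn.disjoint_of_isReachableClosed hC hD.compl hfC heD
  · exact Or.inr <| Or.inl <| Set.disjoint_compl_left_iff_subset.mp <|
      hconn.disjoint_of_isReachableClosed hC.compl hD hfC heD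
  · exact Or.inr <| Or.inr <| Set.disjoint_of_disjoint_compl_of_ncard_add_le
      (hconn.disjoint_of_isReachableClosed hC.compl hD.compl hfC heD) hcard
end

section
/- The graph G' constructed from any finite simple graph G by making V(G) a clique and adding, for each edge e = {u,v} of G, a new vertex adjacent exactly to u and v, is a chordal graph. -/
open SimpleGraph

/-- The graph `G'` on `V ∪ E`: `V` becomes a clique and each edge `e = {u,v}` of `G`
becomes a new vertex adjacent exactly to `u` and `v`. -/
def aug {V : Type} (G : SimpleGraph V) : SimpleGraph (V ⊕ G.edgeSet) where
  Adj x y :=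
    match x, y with
    | Sum.inl u, Sum.inl v => u ≠ v
    | Sum.inl u, Sum.inr e => u ∈ (e : Sym2 V)
    | Sum.inr e, Sum.inl u => u ∈ (e : Sym2 V)
    | Sum.inr _, Sum.inr _ => False
  symm := by
    constructor
    rintro (u | e) (v | f) h
    · exact h.symm
    · exact h
    · exact h
    · exact h.elim
  loopless := by
    constructor
    rintro (u | e) h
    · exact h rfl
    · exact h

/-- A graph is chordal if every cycle of length at least 4 has a chord, i.e. an edge
of the graph joining two vertices of the cycle that is not an edge of the cycle. -/
def IsChordal {α : Type} (G : SimpleGraph α) : Prop :=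
  ∀ (v : α) (c : G.Walk v v), c.IsCycle → 4 ≤ c.length →
    ∃ x y, x ∈ c.support ∧ y ∈ c.support ∧ G.Adj x y ∧ s(x, y) ∉ c.edges

/-!
Two vertices of a cycle that are both neighbours of a third vertex `y` of the cycle are joined
by a chord as soon as they are adjacent and the cycle has length at least 4. In `G'` the
edge-vertices are pairwise non-adjacent, so every neighbour of an edge-vertex lies in the clique
`V`. Hence, if the cycle passes through an edge-vertex `y`, the two cycle-neighbours of `y` are
distinct vertices of `V` and therefore adjacent; if it does not, any vertex `y` of the cycle
will do.
-/

namespace SimpleGraph.Walk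

variable {α : Type*} {G : SimpleGraph α} {u v : α}

def HasChord (c : G.Walk v v) : Prop :=
  ∃ x y, x ∈ c.support ∧ y ∈ c.support ∧ G.Adj x y ∧ s(x, y) ∉ c.edges

lemma HasChord.of_rotate [DecidableEq α] {c : G.Walk v v} (hu : u ∈ c.support)
    (h : (c.rotate u hu).HasChord) : c.HasChord := by
  obtain ⟨x, y, hx, hy, hxy, hnot⟩ := h
  rw [mem_support_rotate_iff] at hx hy
  exact ⟨x, y, hx, hy, hxy, fun hmem => hnot ((c.rotate_edges u hu).mem_iff.mpr hmem)⟩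

lemma IsCycle.snd_penultimate_notMem_edges {c : G.Walk v v} (hc : c.IsCycle)
    (hl : 4 ≤ c.length) : s(c.snd, c.penultimate) ∉ c.edges := by
  have hnil := hc.not_nil
  have hedges : c.edges = s(v, c.snd) :: c.tail.edges := by
    conv_lhs => rw [← c.cons_tail_eq hnil]
    rfl
  rw [hedges, List.mem_cons, not_or]
  constructor
  · rw [Sym2.eq_iff]
    rintro (⟨hsnd, -⟩ | ⟨-, hpen⟩)
    · exact (c.adj_snd hnil).ne hsnd.symm
    · exact (c.adj_penultimate hnil).ne hpen
  · intro hmem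
    have hpen : c.getVert (c.length - 1) = c.getVert 2 := by
      simpa using hc.isPath_tail.eq_snd_of_mem_edges hmem
    have := hc.getVert_injOn (by simp; omega) (by simp; omega) hpen
    omega

lemma IsCycle.hasChord_of_adj_snd_penultimate {c : G.Walk v v} (hc : c.IsCycle)
    (hl : 4 ≤ c.length) (hadj : G.Adj c.snd c.penultimate) : c.HasChord :=
  ⟨c.snd, c.penultimate, c.getVert_mem_support 1, c.getVert_mem_support _, hadj,
    hc.snd_penultimate_notMem_edges hl⟩

end SimpleGraph.Walk

namespace aug

variable {V : Type} {G : SimpleGraph V}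

lemma adj_inl_inl {a b : V} : (aug G).Adj (Sum.inl a) (Sum.inl b) ↔ a ≠ b :=
  Iff.rfl

lemma exists_eq_inl_of_adj_inr {e : G.edgeSet} {x : V ⊕ G.edgeSet}
    (h : (aug G).Adj (Sum.inr e) x) : ∃ a, x = Sum.inl a := by
  cases x with
  | inl a => exact ⟨a, rfl⟩
  | inr f => exact h.elim

lemma exists_mem_support_forall_adj_eq_inl {v : V ⊕ G.edgeSet} (c : (aug G).Walk v v) :
    ∃ y ∈ c.support, ∀ x ∈ c.support, (aug G).Adj y x → ∃ a, x = Sum.inl a := by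
  by_cases hE : ∃ e : G.edgeSet, Sum.inr e ∈ c.support
  · obtain ⟨e, he⟩ := hE
    exact ⟨Sum.inr e, he, fun x _ hx => exists_eq_inl_of_adj_inr hx⟩
  · push Not at hE
    refine ⟨v, c.start_mem_support, fun x hx _ => ?_⟩
    cases x with
    | inl a => exact ⟨a, rfl⟩
    | inr f => exact absurd hx (hE f)

end aug

theorem stmt_2_general {V : Type} (G : SimpleGraph V) :
    IsChordal (aug G) := by
  classical
  intro v c hc hl
  obtain ⟨y, hy, hinl⟩ := aug.exists_mem_support_forall_adj_eq_inl c
  set c' := c.rotate y hy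
  have hc' : c'.IsCycle := hc.rotate hy
  have hnil := hc'.not_nil
  have hmem (x) (hx : x ∈ c'.support) : x ∈ c.support := (c.mem_support_rotate_iff y hy).mp hx
  obtain ⟨a, ha⟩ : ∃ a, c'.snd = Sum.inl a :=
    hinl _ (hmem _ (c'.getVert_mem_support 1)) (c'.adj_snd hnil)
  obtain ⟨b, hb⟩ : ∃ b, c'.penultimate = Sum.inl b :=
    hinl _ (hmem _ (c'.getVert_mem_support _)) (c'.adj_penultimate hnil).symm
  have hadj : (aug G).Adj c'.snd c'.penultimate := by
    rw [ha, hb, aug.adj_inl_inl]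
    rintro rfl
    exact hc'.snd_ne_penultimate (ha.trans hb.symm)
  exact Walk.HasChord.of_rotate hy
    (hc'.hasChord_of_adj_snd_penultimate (by rwa [c.length_rotate]) hadj)

/-- the graph `G'` obtained from any finite simple graph `G` is chordal. -/
theorem stmt_2 {V : Type} [Fintype V] (G : SimpleGraph V) :
    IsChordal (aug G) :=
  stmt_2_general G
end

section
/- Let T be a tree with more than one vertex in which every leaf has a neighbour of degree at least 2, and suppose that whenever a vertex is adjacent to a leaf, all its neighbours but one are leaves. Let α₁ be the minimum, over edges e of T, of the smaller number of vertices among the two components of T − e, subject to both components having at least 2 vertices; assume α₁ ≥ 2 exists. Then every component S of T − e (for an edge e) with exactly α₁ vertices and 2 ≤ α₁ ≤ |V(T)| − 2 is a star, i.e., S has a vertex adjacent to all other vertices of S, each of which is a leaf of T. -/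
/-!
Let `S` be a shape of minimum size `α₁`, cut off by the edge `ab` with `a ∈ S`. For `v ∈ S`,
`v ≠ a`, let `u` be the next vertex on the path from `v` to `a`. The component of `v` in
`T − vu` lies in `S \ {a}`, so it is too small to be a shape and must be `{v}`: `v` is a leaf
hanging at `u`. If `u ≠ a`, the same applies to `u`, whose only neighbour would then be both `v`
and its successor towards `a`, which is absurd. Hence every `v ∈ S \ {a}` is a leaf adjacent
to `a`.
-/

open SimpleGraph

/-- The vertex set of the component of `T − s(a,b)` containing `a`. -/
def compSet {V : Type} (G : SimpleGraph V) (a b : V) : Set V :=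
  {v | (G.deleteEdges {s(a, b)}).Reachable a v}

/-- `compSet G a b` is a *shape*: `s(a,b)` is an edge and the component of `a` in
`T − s(a,b)` has at least `2` vertices and misses at least `2` vertices. -/
def IsShape {V : Type} [Fintype V] (G : SimpleGraph V) (a b : V) : Prop :=
  G.Adj a b ∧ 2 ≤ (compSet G a b).ncard ∧ (compSet G a b).ncard + 2 ≤ Fintype.card V

/-- `v` is a leaf: it has exactly one neighbour. -/
def IsLeaf {V : Type} (G : SimpleGraph V) (v : V) : Prop :=
  (G.neighborSet v).ncard = 1

namespace SimpleGraph

variable {V : Type} {G : SimpleGraph V}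

lemma Walk.reachable_deleteEdges_of_forall_notMem {s t : Set (Sym2 V)} {x y : V}
    (p : (G.deleteEdges s).Walk x y) (h : ∀ e ∈ p.edges, e ∉ t) :
    (G.deleteEdges t).Reachable x y :=
  ⟨p.transfer _ fun e he => by
    have := p.edges_subset_edgeSet he
    rw [edgeSet_deleteEdges] at this ⊢
    exact ⟨this.1, h e he⟩⟩

lemma compSet_subset_diff_singleton {a b v u : V} (hv : v ∈ compSet G a b)
    (hva : ¬ (G.deleteEdges {s(v, u)}).Reachable v a) :
    compSet G v u ⊆ compSet G a b \ {a} := by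
  classical
  rintro w ⟨p⟩
  have hab : s(a, b) ∉ p.edges := fun he =>
    hva ⟨p.takeUntil a (p.fst_mem_support_of_mem_edges he)⟩
  refine ⟨Reachable.trans hv (p.reachable_deleteEdges_of_forall_notMem ?_), ?_⟩
  · rintro e he rfl
    exact hab he
  · rintro rfl
    exact hva ⟨p⟩

lemma neighborSet_eq_singleton_of_compSet_eq_singleton {v u : V} (hvu : G.Adj v u)
    (h : compSet G v u = {v}) : G.neighborSet v = {u} := by
  ext x
  refine ⟨fun hvx => ?_, fun hx => hx ▸ hvu⟩
  by_contra hxu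
  have hx : x ∈ compSet G v u :=
    (deleteEdges_adj.mpr ⟨hvx, fun he => hxu (Sym2.congr_right.mp he)⟩).reachable
  rw [h, Set.mem_singleton_iff] at hx
  exact G.loopless.irrefl v (hx ▸ hvx)

variable [Fintype V]

lemma compSet_eq_singleton_of_subset_minimalShape {α₁ : ℕ}
    (hmin : ∀ a b, IsShape G a b → α₁ ≤ (compSet G a b).ncard)
    {a b v u : V} (hab : IsShape G a b) (hS : (compSet G a b).ncard = α₁) (hvu : G.Adj v u)
    (hsub : compSet G v u ⊆ compSet G a b \ {a}) : compSet G v u = {v} := by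
  have ha : a ∈ compSet G a b := Reachable.refl a
  have hv : v ∈ compSet G v u := Reachable.refl v
  have hlt : (compSet G v u).ncard < α₁ := by
    calc (compSet G v u).ncard ≤ (compSet G a b \ {a}).ncard := Set.ncard_le_ncard hsub
      _ < α₁ := by
        have := hab.2.1
        rw [Set.ncard_sdiff_singleton_of_mem ha, hS]
        omega
  have hle : (compSet G v u).ncard ≤ 1 := by
    by_contra! h2
    have hcard := hab.2.2
    have := hmin v u ⟨hvu, h2, by omega⟩
    omega
  obtain ⟨x, hx⟩ := Set.ncard_eq_one.mp
    (le_antisymm hle ((Set.ncard_pos (Set.toFinite _)).mpr ⟨v, hv⟩))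
  rw [hx] at hv ⊢
  rw [Set.mem_singleton_iff.mp hv]

lemma neighborSet_eq_singleton_of_minimalShape (hG : G.IsAcyclic) {α₁ : ℕ}
    (hmin : ∀ a b, IsShape G a b → α₁ ≤ (compSet G a b).ncard)
    {a b v u : V} (hab : IsShape G a b) (hS : (compSet G a b).ncard = α₁)
    (h : (G.deleteEdges {s(a, b)}).Adj v u) (q : (G.deleteEdges {s(a, b)}).Walk u a)
    (hq : (Walk.cons h q).IsPath) : G.neighborSet v = {u} := by
  have hvu : G.Adj v u := (deleteEdges_adj.mp h).1
  have hua : (G.deleteEdges {s(v, u)}).Reachable u a := by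
    refine q.reachable_deleteEdges_of_forall_notMem ?_
    rintro e he rfl
    exact ((Walk.isTrail_cons h q).mp hq.isTrail).2 he
  have hva : ¬ (G.deleteEdges {s(v, u)}).Reachable v a := fun hr =>
    isAcyclic_iff_forall_adj_isBridge.mp hG hvu (hr.trans hua.symm)
  have hv : v ∈ compSet G a b := ⟨(Walk.cons h q).reverse⟩
  exact neighborSet_eq_singleton_of_compSet_eq_singleton hvu
    (compSet_eq_singleton_of_subset_minimalShape hmin hab hS hvu
      (compSet_subset_diff_singleton hv hva))

end SimpleGraph

theorem stmt_3_general {V : Type} [Fintype V] (G : SimpleGraph V) (hG : G.IsTree)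
    (α₁ : ℕ)
    (hmin : ∀ a b, IsShape G a b → α₁ ≤ (compSet G a b).ncard) :
    ∀ a b, IsShape G a b → (compSet G a b).ncard = α₁ →
      ∃ c ∈ compSet G a b, ∀ v ∈ compSet G a b, v ≠ c →
        G.Adj c v ∧ IsLeaf G v := by
  classical
  intro a b hab hS
  refine ⟨a, Reachable.refl a, fun v ⟨w⟩ hva => ?_⟩
  obtain ⟨u, h, q, hp⟩ := Walk.exists_eq_cons_of_ne hva w.toPath.1.reverse
  have hpath : (Walk.cons h q).IsPath := hp ▸ w.toPath.2.reverse
  have hv := neighborSet_eq_singleton_of_minimalShape hG.isAcyclic hmin hab hS h q hpath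
  have hleaf : IsLeaf G v := by rw [IsLeaf, hv, Set.ncard_singleton]
  obtain rfl : u = a := by
    by_contra hua
    obtain ⟨u', h', q', rfl⟩ := Walk.exists_eq_cons_of_ne hua q
    have hu :=
      neighborSet_eq_singleton_of_minimalShape hG.isAcyclic hmin hab hS h' q' hpath.of_cons
    have hvu' : v ∈ G.neighborSet u := (deleteEdges_adj.mp h).1.symm
    rw [hu, Set.mem_singleton_iff] at hvu'
    exact (Walk.cons_isPath_iff h _).mp hpath |>.2 (by simp [hvu'])
  exact ⟨(deleteEdges_adj.mp h).1.symm, hleaf⟩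

/-- in a tree where every leaf has a neighbour of degree at least 2 and
every vertex adjacent to a leaf has all neighbours but one being leaves, every shape
whose number of vertices is the minimum shape size `α₁ ≥ 2` is a star whose
non-central vertices are leaves of `T`. -/
theorem stmt_3 {V : Type} [Fintype V] (G : SimpleGraph V) (hG : G.IsTree)
    (hcard : 2 ≤ Fintype.card V)
    (hleaf : ∀ v, IsLeaf G v → ∀ u, G.Adj v u → 2 ≤ (G.neighborSet u).ncard)
    (hstruct : ∀ v u, G.Adj v u → IsLeaf G u →
      ∀ x y, G.Adj v x → G.Adj v y → ¬ IsLeaf G x → ¬ IsLeaf G y → x = y)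
    (α₁ : ℕ) (hα₁ : 2 ≤ α₁)
    (hmin : ∀ a b, IsShape G a b → α₁ ≤ (compSet G a b).ncard)
    (hex : ∃ a b, IsShape G a b ∧ (compSet G a b).ncard = α₁) :
    ∀ a b, IsShape G a b → (compSet G a b).ncard = α₁ →
      ∃ c ∈ compSet G a b, ∀ v ∈ compSet G a b, v ≠ c →
        G.Adj c v ∧ IsLeaf G v :=
  stmt_3_general G hG α₁ hmin
end

section
/- Let T be a tree and let σ = ((σ₁,w₁),…,(σ_t,w_t)) be an α-situation with α ≤ w(T)/2 (where w(T) is the total vertex weight of T, all weights positive). For each i, let T_i be a shape of T isomorphic to (σ_i, w_i). If for all i ≠ j, T_i is not a subtree of T_j, then the shapes T₁,…,T_t are pairwise vertex-disjoint and there exists a subtree T' of T, disjoint from all T_i, together with t distinct edges e₁,…,e_t each having exactly one end in V(T'), such that T_i is the component of T − e_i not containing T', for each i. -/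
/-!
Deleting an edge `ab` of a tree splits it into complementary sides `A ∋ a` and `B ∋ b`. The side
of `ab` that avoids an endpoint of another edge `cd` is connected in `T − cd`, so it lies in one
side of `cd`; hence the sides of two edges are nested, disjoint, or cover the tree. For two
shapes `A_i`, `A_j` nesting is excluded by hypothesis and covering by the weights, since
`w(A_i) + w(A_j) ≤ α ≤ w(T)/2 < w(T)`. So every `A_i` lies on the far side `B_j` of every other
edge, and `T' = ⋂ B_i` is the required subtree: it contains each `b_i`, and it is connected
because in a tree each `B_i` contains the path between any two of its vertices.
-/

open SimpleGraph

lemma mem_compSet_self {V : Type} (G : SimpleGraph V) (a b : V) :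
    a ∈ compSet G a b :=
  Reachable.refl a

/-- The shape of `(G, w)` rooted at `a` given by the edge `s(a,b)` is isomorphic, as a
rooted weighted tree, to the rooted weighted tree `(H, r, u)`. -/
def ShapeIsoTo {V R : Type} (G : SimpleGraph V) (w : V → ℕ+) (a b : V)
    (H : SimpleGraph R) (r : R) (u : R → ℕ+) : Prop :=
  ∃ φ : G.induce (compSet G a b) ≃g H,
    φ ⟨a, mem_compSet_self G a b⟩ = r ∧ ∀ v, u (φ v) = w v.val

section CompSet

variable {V : Type} {G : SimpleGraph V} {a b c d x y v : V}

lemma mem_compSet_swap_iff : v ∈ compSet G b a ↔ (G.deleteEdges {s(a, b)}).Reachable b v := by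
  rw [compSet, Set.mem_ofPred_eq, Sym2.eq_swap]

lemma mem_compSet_of_adj (hx : x ∈ compSet G a b) (hxy : G.Adj x y) (he : s(x, y) ≠ s(a, b)) :
    y ∈ compSet G a b :=
  hx.trans (deleteEdges_adj.2 ⟨hxy, he⟩).reachable

lemma compSet_union_compSet_swap (hG : G.Connected) :
    compSet G a b ∪ compSet G b a = Set.univ := by
  refine Set.eq_univ_of_forall fun v => ?_
  induction (reachable_iff_reflTransGen a v).1 (hG.preconnected a v) with
  | refl => exact Or.inl (mem_compSet_self G a b)
  | @tail y z _ hyz ih =>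
    by_cases he : s(y, z) = s(a, b)
    · rcases Sym2.eq_iff.1 he with ⟨-, rfl⟩ | ⟨-, rfl⟩
      · exact Or.inr (mem_compSet_self G _ a)
      · exact Or.inl (mem_compSet_self G _ b)
    · refine ih.imp (mem_compSet_of_adj · hyz he) (mem_compSet_of_adj · hyz ?_)
      rwa [Sym2.eq_swap (a := b)]

lemma disjoint_compSet_swap (hG : G.IsAcyclic) (hab : G.Adj a b) :
    Disjoint (compSet G a b) (compSet G b a) :=
  Set.disjoint_left.2 fun _ hva hvb =>
    isAcyclic_iff_forall_adj_isBridge.1 hG hab (hva.trans (mem_compSet_swap_iff.1 hvb).symm)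

lemma isCompl_compSet_swap (hG : G.IsTree) (hab : G.Adj a b) :
    IsCompl (compSet G a b) (compSet G b a) :=
  ⟨disjoint_compSet_swap hG.isAcyclic hab,
    codisjoint_iff.2 (compSet_union_compSet_swap hG.connected)⟩

lemma reachable_deleteEdges_of_mem_compSet (hc : c ∉ compSet G a b) (hv : v ∈ compSet G a b) :
    (G.deleteEdges {s(c, d)}).Reachable a v := by
  induction (reachable_iff_reflTransGen a v).1 hv with
  | refl => rfl
  | @tail y z hay hyz ih =>
    have hy : y ∈ compSet G a b := (reachable_iff_reflTransGen a y).2 hay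
    refine (ih hy).trans (deleteEdges_adj.2 ⟨(deleteEdges_adj.1 hyz).1, ?_⟩).reachable
    intro he
    rcases Sym2.eq_iff.1 he with ⟨rfl, -⟩ | ⟨-, rfl⟩
    · exact hc hy
    · exact hc (hy.trans hyz.reachable)

lemma compSet_subset_or_subset_swap_of_notMem (hG : G.Connected) (hc : c ∉ compSet G a b) :
    compSet G a b ⊆ compSet G c d ∨ compSet G a b ⊆ compSet G d c := by
  rcases (compSet_union_compSet_swap hG).symm ▸ Set.mem_univ a with ha | ha
  · exact Or.inl fun v hv => ha.trans (reachable_deleteEdges_of_mem_compSet hc hv)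
  · exact Or.inr fun v hv =>
      mem_compSet_swap_iff.2 ((mem_compSet_swap_iff.1 ha).trans
        (reachable_deleteEdges_of_mem_compSet hc hv))

lemma compSet_laminar (hG : G.IsTree) (hab : G.Adj a b) :
    compSet G a b ⊆ compSet G c d ∨ compSet G a b ⊆ compSet G d c ∨
      compSet G b a ⊆ compSet G c d ∨ compSet G b a ⊆ compSet G d c := by
  by_cases hc : c ∈ compSet G a b
  · have hc' : c ∉ compSet G b a := (isCompl_compSet_swap hG hab).disjoint.notMem_of_mem_left hc
    rcases compSet_subset_or_subset_swap_of_notMem hG.connected (d := d) hc' with h | h <;>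
      simp only [h, true_or, or_true]
  · rcases compSet_subset_or_subset_swap_of_notMem hG.connected (d := d) hc with h | h <;>
      simp only [h, true_or, or_true]

lemma compSet_subset_compSet_swap (hG : G.IsTree) (hab : G.Adj a b) (hcd : G.Adj c d)
    (hAC : ¬compSet G a b ⊆ compSet G c d) (hCA : ¬compSet G c d ⊆ compSet G a b)
    (hcover : compSet G a b ∪ compSet G c d ≠ Set.univ) :
    compSet G a b ⊆ compSet G d c := by
  have hB := (isCompl_compSet_swap hG hab).compl_eq
  have hD := (isCompl_compSet_swap hG hcd).compl_eq
  rcases compSet_laminar (c := c) (d := d) hG hab with h | h | h | h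
  · exact absurd h hAC
  · exact h
  · exact absurd (Set.compl_subset_iff_union.1 (hB ▸ h)) hcover
  · exact absurd (Set.compl_subset_compl.1 (hB ▸ hD ▸ h)) hCA

lemma edge_ne_of_not_subset (hG : G.Connected) (hAC : ¬compSet G a b ⊆ compSet G c d)
    (hcover : compSet G a b ∪ compSet G c d ≠ Set.univ) : s(a, b) ≠ s(c, d) := by
  intro he
  rcases Sym2.eq_iff.1 he with ⟨rfl, rfl⟩ | ⟨rfl, rfl⟩
  · exact hAC subset_rfl
  · exact hcover (Set.union_comm _ _ ▸ compSet_union_compSet_swap hG)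

lemma SimpleGraph.IsAcyclic.mem_compSet_of_mem_support (hG : G.IsAcyclic) {p : G.Walk x y}
    (hp : p.IsPath) (hx : x ∈ compSet G a b) (hy : y ∈ compSet G a b) (hv : v ∈ p.support) :
    v ∈ compSet G a b := by
  classical
  obtain ⟨q⟩ := hx.symm.trans hy
  have hpq : p = q.bypass.mapLe (deleteEdges_le _) :=
    congrArg Subtype.val ((hG.subsingleton_path x y).elim ⟨p, hp⟩ ⟨_, q.bypass_isPath.mapLe _⟩)
  rw [hpq, Walk.support_mapLe_eq_support] at hv
  exact hx.trans ⟨q.bypass.takeUntil v hv⟩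

lemma SimpleGraph.IsTree.connected_induce_iInter_compSet {ι : Sort*} (hG : G.IsTree)
    (x y : ι → V) (hne : (⋂ i, compSet G (x i) (y i)).Nonempty) :
    (G.induce (⋂ i, compSet G (x i) (y i))).Connected := by
  refine (connected_iff _).2 ⟨?_, hne.to_subtype⟩
  rintro ⟨u, hu⟩ ⟨v, hv⟩
  obtain ⟨p, hp⟩ := hG.connected.preconnected.exists_isPath u v
  exact ⟨p.induce _ fun z hz => Set.mem_iInter.2 fun i =>
    hG.isAcyclic.mem_compSet_of_mem_support hp (Set.mem_iInter.1 hu i) (Set.mem_iInter.1 hv i) hz⟩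

lemma ShapeIsoTo.finsum_weight_eq {R : Type} {w : V → ℕ+} {H : SimpleGraph R} {r : R}
    {u : R → ℕ+} (h : ShapeIsoTo G w a b H r u) :
    ∑ᶠ x, (u x : ℕ) = ∑ᶠ v ∈ compSet G a b, (w v : ℕ) := by
  obtain ⟨φ, -, hφ⟩ := h
  rw [← finsum_set_coe_eq_finsum_mem, ← finsum_comp_equiv φ.toEquiv]
  exact finsum_congr fun v => congrArg _ (hφ v)

end CompSet

lemma union_ne_univ_of_two_mul_sum_le {ι V : Type*} [Fintype ι] [Fintype V] [Nonempty V]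
    (w : V → ℕ+) (A : ι → Set V) (h : 2 * ∑ k, ∑ᶠ v ∈ A k, (w v : ℕ) ≤ ∑ v, (w v : ℕ))
    {i j : ι} (hij : i ≠ j) : A i ∪ A j ≠ Set.univ := by
  intro hunion
  have hcover : ∑ v, (w v : ℕ) ≤ ∑ᶠ v ∈ A i, (w v : ℕ) + ∑ᶠ v ∈ A j, (w v : ℕ) := by
    rw [← finsum_eq_sum_of_fintype, ← finsum_mem_univ, ← hunion,
      ← finsum_mem_union_inter (Set.toFinite _) (Set.toFinite _)]
    exact Nat.le_add_right _ _
  have hpair := Finset.add_le_sum (fun k _ => Nat.zero_le (∑ᶠ v ∈ A k, (w v : ℕ)))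
    (Finset.mem_univ i) (Finset.mem_univ j) hij
  have hpos : 0 < ∑ v, (w v : ℕ) := Finset.sum_pos (fun v _ => (w v).pos) Finset.univ_nonempty
  omega

theorem stmt_5_general {V : Type} [Fintype V] (G : SimpleGraph V) (hG : G.IsTree)
    (w : V → ℕ+) (t : ℕ)
    (R : Fin t → Type) (H : ∀ i, SimpleGraph (R i)) (r : ∀ i, R i)
    (u : ∀ i, (R i) → ℕ+)
    (α : ℕ) (hα : α = ∑ i, ∑ᶠ x, (u i x : ℕ)) (hhalf : 2 * α ≤ ∑ v, (w v : ℕ))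
    (a b : Fin t → V) (hshape : ∀ i, IsShape G (a i) (b i))
    (hiso : ∀ i, ShapeIsoTo G w (a i) (b i) (H i) (r i) (u i))
    (hnsub : ∀ i j, i ≠ j → ¬ compSet G (a i) (b i) ⊆ compSet G (a j) (b j)) :
    (∀ i j, i ≠ j → Disjoint (compSet G (a i) (b i)) (compSet G (a j) (b j))) ∧
    ∃ S : Set V, S.Nonempty ∧ (G.induce S).Connected ∧
      (∀ i, Disjoint (compSet G (a i) (b i)) S) ∧
      (∀ i j, i ≠ j → s(a i, b i) ≠ s(a j, b j)) ∧
      (∀ i, b i ∈ S ∧ a i ∉ S) ∧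
      (∀ i, S ⊆ compSet G (b i) (a i)) := by
  have hadj i : G.Adj (a i) (b i) := (hshape i).1
  have : Nonempty V := hG.connected.nonempty
  have hcover : ∀ i j, i ≠ j → compSet G (a i) (b i) ∪ compSet G (a j) (b j) ≠ Set.univ := by
    refine fun i j => union_ne_univ_of_two_mul_sum_le w (fun k => compSet G (a k) (b k)) ?_
    simpa only [hα, fun i => (hiso i).finsum_weight_eq] using hhalf
  have hsub i j (hij : i ≠ j) : compSet G (a i) (b i) ⊆ compSet G (b j) (a j) :=
    compSet_subset_compSet_swap hG (hadj i) (hadj j) (hnsub i j hij) (hnsub j i hij.symm)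
      (hcover i j hij)
  have hedge i j (hij : i ≠ j) : s(a i, b i) ≠ s(a j, b j) :=
    edge_ne_of_not_subset hG.connected (hnsub i j hij) (hcover i j hij)
  set S := ⋂ i, compSet G (b i) (a i)
  have hbS i : b i ∈ S := Set.mem_iInter.2 fun j => by
    rcases eq_or_ne i j with rfl | hij
    · exact mem_compSet_self G _ _
    · refine mem_compSet_of_adj (hsub i j hij (mem_compSet_self G _ _)) (hadj i) ?_
      rw [Sym2.eq_swap (a := b j)]
      exact hedge i j hij
  have hSA i : Disjoint (compSet G (a i) (b i)) S :=
    (isCompl_compSet_swap hG (hadj i)).disjoint.mono_right (Set.iInter_subset _ i)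
  have hS : S.Nonempty := by
    rcases isEmpty_or_nonempty (Fin t) with _ | ⟨⟨i⟩⟩
    · simp [S]
    · exact ⟨b i, hbS i⟩
  refine ⟨fun i j hij =>
    (isCompl_compSet_swap hG (hadj j)).disjoint.symm.mono_left (hsub i j hij),
    S, hS, hG.connected_induce_iInter_compSet _ _ hS, hSA, hedge,
    fun i => ⟨hbS i, (hSA i).notMem_of_mem_left (mem_compSet_self G _ _)⟩,
    fun i => Set.iInter_subset _ i⟩

/-- given an `α`-situation `σ = ((σ₁,w₁),…,(σ_t,w_t))` with
`α ≤ w(T)/2` and shapes `T_i` of `T` isomorphic to the `σ_i`, no one contained in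
another, the `T_i` are pairwise disjoint and `σ` occurs in `T`: there is a subtree `T'`
disjoint from all the `T_i`, and `t` distinct edges `e_i = s(a_i, b_i)`, each with
exactly one end `b_i` in `T'`, such that `T_i` is the component of `T − e_i` not
containing `T'`. -/
theorem stmt_5 {V : Type} [Fintype V] (G : SimpleGraph V) (hG : G.IsTree)
    (w : V → ℕ+) (t : ℕ) (ht : 2 ≤ t)
    (R : Fin t → Type) (H : ∀ i, SimpleGraph (R i)) (r : ∀ i, R i)
    (u : ∀ i, (R i) → ℕ+) (hH : ∀ i, (H i).IsTree)
    (α : ℕ) (hα : α = ∑ i, ∑ᶠ x, (u i x : ℕ)) (hhalf : 2 * α ≤ ∑ v, (w v : ℕ))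
    (a b : Fin t → V) (hshape : ∀ i, IsShape G (a i) (b i))
    (hiso : ∀ i, ShapeIsoTo G w (a i) (b i) (H i) (r i) (u i))
    (hnsub : ∀ i j, i ≠ j → ¬ compSet G (a i) (b i) ⊆ compSet G (a j) (b j)) :
    (∀ i j, i ≠ j → Disjoint (compSet G (a i) (b i)) (compSet G (a j) (b j))) ∧
    ∃ S : Set V, S.Nonempty ∧ (G.induce S).Connected ∧
      (∀ i, Disjoint (compSet G (a i) (b i)) S) ∧
      (∀ i j, i ≠ j → s(a i, b i) ≠ s(a j, b j)) ∧
      (∀ i, b i ∈ S ∧ a i ∉ S) ∧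
      (∀ i, S ⊆ compSet G (b i) (a i)) :=
  stmt_5_general G hG w t R H r u α hα hhalf a b hshape hiso hnsub
end

section
/- For a graph G = (V,E) and positive integers k, the q-chromatic function M_G(k,q) = ∑_{s proper k-colourings of G} q^{∑_{v∈V} s(v)} satisfies M_G(k,q) = ∑_{A ⊆ E} (−1)^{|A|} ∏_{W ∈ com(A)} ( q^{|W|·0} + q^{|W|·1} + ⋯ + q^{|W|(k−1)} ), where com(A) is the set of connected components of the spanning subgraph (V,A), |W| is the number of vertices of W, and (k)_{q^{|W|}} denotes 1 + q^{|W|} + ⋯ + q^{|W|(k−1)}. -/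
/-!
Inclusion–exclusion over the edges: the proper colourings are those monochromatic on no edge,
and the colourings monochromatic on every edge of `A ⊆ E` are exactly those constant on the
components of `(V, A)`. Choosing one colour `i` per component `W` contributes `q ^ (|W| * i)`,
whence the product of the sums `(k)_{q^{|W|}}`.
-/

open SimpleGraph

theorem finsum_subset_coe_eq_sum_powerset {α M : Type*} [AddCommMonoid M] (s : Finset α)
    (f : Set α → M) :
    ∑ᶠ (A : Set α) (_ : A ⊆ ↑s), f A = ∑ t ∈ s.powerset, f ↑t := by
  have hpow : (𝒫 (s : Set α)) = SetLike.coe '' (s.powerset : Set (Finset α)) := by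
    rw [Finset.coe_powerset, Set.image_preimage_eq_of_subset]
    intro A hA
    exact ⟨(s.finite_toSet.subset hA).toFinset, by simp⟩
  rw [← finsum_mem_coe_finset, ← finsum_mem_image SetLike.coe_injective.injOn, ← hpow]
  rfl

namespace SimpleGraph

variable {V : Type*} {H : SimpleGraph V} {α : Type*}

theorem Reachable.eq_of_forall_adj {s : V → α} (hs : ∀ u v, H.Adj u v → s u = s v) {u v : V}
    (h : H.Reachable u v) : s u = s v := by
  obtain ⟨p⟩ := h
  induction p with
  | nil => rfl
  | cons hadj _ ih => exact (hs _ _ hadj).trans ih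

variable (H α) in
def funConnectedComponentEquiv :
    (H.ConnectedComponent → α) ≃ {s : V → α // ∀ u v, H.Adj u v → s u = s v} where
  toFun f := ⟨fun v => f (H.connectedComponentMk v),
    fun _ _ h => congrArg f (ConnectedComponent.connectedComponentMk_eq_of_adj h)⟩
  invFun s := Quot.lift s.1 fun _ _ => Reachable.eq_of_forall_adj s.2
  left_inv _ := funext <| ConnectedComponent.ind fun _ => rfl
  right_inv _ := rfl

theorem finprod_sum_pow_ncard_supp [Fintype V] [DecidableEq V] [DecidableRel H.Adj] [Fintype α]
    [DecidableEq α] {R : Type*} [CommSemiring R] (g : α → R) :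
    ∏ᶠ c : H.ConnectedComponent, ∑ a, g a ^ c.supp.ncard =
      ∑ s : {s : V → α // ∀ u v, H.Adj u v → s u = s v}, ∏ v, g (s.1 v) := by
  classical
  have hcard (c : H.ConnectedComponent) :
      c.supp.ncard = Fintype.card {v // H.connectedComponentMk v = c} := by
    rw [← Nat.card_eq_fintype_card, ← Nat.card_coe_set_eq]
    rfl
  rw [finprod_eq_prod_of_fintype, Fintype.prod_sum,
    ← (funConnectedComponentEquiv H α).sum_comp]
  refine Fintype.sum_congr _ _ fun f => ?_
  simp only [hcard, ← Finset.card_univ, ← Finset.prod_const]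
  exact Fintype.prod_fiberwise' H.connectedComponentMk (fun c => g (f c))

theorem fromEdgeSet_adj_imp_eq_iff {B : Set (Sym2 V)} {s : V → α} :
    (∀ u v, (fromEdgeSet B).Adj u v → s u = s v) ↔ ∀ e ∈ B, (e.map s).IsDiag := by
  refine ⟨fun h e he => ?_, fun h u v huv => h _ huv.1⟩
  induction e using Sym2.ind with
  | h u v =>
    by_cases huv : u = v
    · simp [huv]
    · exact h u v ⟨he, huv⟩

theorem forall_adj_imp_ne_iff (G : SimpleGraph V) {s : V → α} :
    (∀ u v, G.Adj u v → s u ≠ s v) ↔ ∀ e ∈ G.edgeSet, ¬ (e.map s).IsDiag := by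
  refine ⟨fun h e he => ?_, fun h u v huv => by simpa using h s(u, v) huv⟩
  induction e using Sym2.ind with
  | h u v => simpa using h u v he

end SimpleGraph

theorem Finset.sum_range_pow_mul_eq_sum_fin {R : Type*} [Semiring R] (q : R) (n k : ℕ) :
    ∑ i ∈ Finset.range k, q ^ (n * i) = ∑ i : Fin k, (q ^ (i : ℕ)) ^ n := by
  simp only [← pow_mul, mul_comm n]
  exact (Fin.sum_univ_eq_sum_range _ k).symm

/-- the q-chromatic function
`M_G(k,q) = ∑_{s proper k-colouring} q^{∑_v s(v)}` satisfies
`M_G(k,q) = ∑_{A ⊆ E} (−1)^{|A|} ∏_{W ∈ com(A)} (1 + q^{|W|} + ⋯ + q^{|W|(k−1)})`,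
as an identity valid for every element `q` of any commutative ring. -/
theorem stmt_11 {V : Type} [Fintype V] (G : SimpleGraph V) (k : ℕ)
    {R : Type} [CommRing R] (q : R) :
    (∑ᶠ (s : V → Fin k) (_ : ∀ u v, G.Adj u v → s u ≠ s v), q ^ (∑ v, (s v).val)) =
      ∑ᶠ (A : Set (Sym2 V)) (_ : A ⊆ G.edgeSet),
        (-1 : R) ^ A.ncard *
          ∏ᶠ c : (SimpleGraph.fromEdgeSet A).ConnectedComponent,
            ∑ i ∈ Finset.range k, q ^ (c.supp.ncard * i) := by
  classical
  let mono (e : Sym2 V) : Finset (V → Fin k) := {s | (e.map s).IsDiag}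
  have hproper :
      (∑ᶠ (s : V → Fin k) (_ : ∀ u v, G.Adj u v → s u ≠ s v), q ^ (∑ v, (s v).val)) =
        ∑ s ∈ G.edgeFinset.inf fun e => (mono e)ᶜ, q ^ ∑ v, (s v).val :=
    finsum_cond_eq_sum_of_cond_iff _ fun _ => by simp [mono, Finset.mem_inf, forall_adj_imp_ne_iff]
  have hcomponents (t : Finset (Sym2 V)) :
      ∏ᶠ c : (fromEdgeSet (t : Set (Sym2 V))).ConnectedComponent,
          ∑ i ∈ Finset.range k, q ^ (c.supp.ncard * i) =
        ∑ s ∈ t.inf mono, q ^ ∑ v, (s v).val := by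
    simp only [Finset.sum_range_pow_mul_eq_sum_fin, finprod_sum_pow_ncard_supp,
      Finset.prod_pow_eq_pow_sum]
    refine (Finset.sum_subtype (t.inf mono) (fun s => ?_) fun s => q ^ ∑ v, (s v).val).symm
    rw [fromEdgeSet_adj_imp_eq_iff]
    simp [mono, Finset.mem_inf]
  rw [hproper, ← G.coe_edgeFinset, finsum_subset_coe_eq_sum_powerset,
    Finset.inclusion_exclusion_sum_inf_compl]
  refine Finset.sum_congr rfl fun t _ => ?_
  rw [Set.ncard_coe_finset, hcomponents, zsmul_eq_mul]
  push_cast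
  rfl
end

section
/- Let T be a tree and T' the tree obtained from T by identifying each leaf of T with the root (center) of a new 3-vertex star. Then T can be recovered from T': the vertex set of T equals the set of non-leaf vertices of T', and deleting all leaves of T' yields a tree isomorphic to T. Consequently, for trees T₁ and T₂ with at least 2 vertices, T₁ ≅ T₂ if and only if T₁' ≅ T₂'. -/
/-! When `T` has no isolated vertices, the vertices of `T` are exactly the non-leaves of `T'`:
a leaf of `T` gains two pendant neighbours, any other vertex keeps its (at least two)
neighbours, and the new vertices are leaves. Isomorphisms preserve the set of non-leaves, so an
isomorphism `T₁' ≅ T₂'` restricts to one between the non-leaf subgraphs, i.e. between `T₁` and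
`T₂`. -/

open SimpleGraph

/-- The tree `T'`: each leaf of `T` is identified with the center of a new 3-vertex
star, i.e. each leaf receives two new pendant neighbours. -/
def attach {V : Type} (G : SimpleGraph V) :
    SimpleGraph (V ⊕ ({v : V // (G.neighborSet v).ncard = 1} × Fin 2)) where
  Adj x y :=
    match x, y with
    | Sum.inl u, Sum.inl v => G.Adj u v
    | Sum.inl u, Sum.inr p => u = p.1.val
    | Sum.inr p, Sum.inl u => u = p.1.val
    | Sum.inr _, Sum.inr _ => False
  symm := by
    constructor
    rintro (u | p) (v | q) h
    · exact h.symm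
    · exact h
    · exact h
    · exact h.elim
  loopless := by
    constructor
    rintro (u | p) h
    · exact G.irrefl h
    · exact h

namespace SimpleGraph

variable {V W : Type*} {G : SimpleGraph V} {H : SimpleGraph W}

def nonLeaves (G : SimpleGraph V) : Set V := {x | (G.neighborSet x).ncard ≠ 1}

lemma Iso.ncard_neighborSet (f : G ≃g H) (v : V) :
    (H.neighborSet (f v)).ncard = (G.neighborSet v).ncard := by
  rw [← f.image_neighborSet, Set.ncard_image_of_injective _ f.injective]

lemma Iso.bijOn_nonLeaves (f : G ≃g H) : Set.BijOn f G.nonLeaves H.nonLeaves :=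
  f.toEquiv.bijOn fun v => not_congr (by rw [← f.ncard_neighborSet v]; rfl)

lemma Connected.not_isIsolated_of_two_le_card [Fintype V] (hG : G.Connected)
    (hc : 2 ≤ Fintype.card V) (v : V) : ¬ G.IsIsolated v :=
  haveI := Fintype.one_lt_card_iff_nontrivial.mp hc
  exists_adj_iff_not_isIsolated.mp (hG.preconnected.exists_adj_of_nontrivial v)

end SimpleGraph

section Attach

variable {V W : Type} {G : SimpleGraph V} {H : SimpleGraph W}

def attachEmbedding (G : SimpleGraph V) : G ↪g attach G where
  toFun := Sum.inl
  inj' := Sum.inl_injective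
  map_rel_iff' := Iff.rfl

lemma neighborSet_attach_inr (p : {v : V // (G.neighborSet v).ncard = 1} × Fin 2) :
    (attach G).neighborSet (Sum.inr p) = {Sum.inl p.1.val} := by
  ext (u | q)
  · exact Sum.inl_injective.eq_iff.symm
  · exact iff_of_false id (by simp)

lemma ncard_neighborSet_attach_inl_ne_one {v : V} (hv : ¬ G.IsIsolated v) :
    ((attach G).neighborSet (Sum.inl v)).ncard ≠ 1 := by
  intro h
  obtain ⟨x, hx⟩ := Set.ncard_eq_one.mp h
  have mem_iff (y) : (attach G).Adj (Sum.inl v) y ↔ y = x := Set.ext_iff.mp hx y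
  by_cases hleaf : (G.neighborSet v).ncard = 1
  · have h₀ := (mem_iff (Sum.inr (⟨v, hleaf⟩, 0))).mp rfl
    have h₁ := (mem_iff (Sum.inr (⟨v, hleaf⟩, 1))).mp rfl
    simpa using h₀.trans h₁.symm
  · obtain ⟨w, hw⟩ := exists_adj_iff_not_isIsolated.mpr hv
    refine hleaf (Set.ncard_eq_one.mpr ⟨w, Set.eq_singleton_iff_unique_mem.mpr ⟨hw, ?_⟩⟩)
    intro u hu
    exact Sum.inl_injective (((mem_iff (.inl u)).mp hu).trans ((mem_iff (.inl w)).mp hw).symm)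

lemma mem_nonLeaves_attach_iff (hG : ∀ v, ¬ G.IsIsolated v)
    (x : V ⊕ ({v : V // (G.neighborSet v).ncard = 1} × Fin 2)) :
    x ∈ (attach G).nonLeaves ↔ ∃ v, x = Sum.inl v := by
  rcases x with v | p
  · exact iff_of_true (ncard_neighborSet_attach_inl_ne_one (hG v)) ⟨v, rfl⟩
  · simp [nonLeaves, neighborSet_attach_inr]

lemma nonLeaves_attach (hG : ∀ v, ¬ G.IsIsolated v) :
    (attach G).nonLeaves = Set.range Sum.inl := by
  ext x
  simp only [mem_nonLeaves_attach_iff hG, Set.mem_range, eq_comm]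

noncomputable def attachInduceNonLeavesIso (hG : ∀ v, ¬ G.IsIsolated v) :
    (attach G).induce (attach G).nonLeaves ≃g G :=
  (Iso.refl.induce (nonLeaves_attach hG ▸ Set.bijOn_id _)).trans
    (attachEmbedding G).isoInduceRange.symm

def SimpleGraph.Iso.attach (e : G ≃g H) : _root_.attach G ≃g _root_.attach H where
  toEquiv := e.toEquiv.sumCongr <| (e.toEquiv.subtypeEquiv fun v =>
    iff_of_eq (congrArg (· = 1) (e.ncard_neighborSet v).symm)).prodCongr (Equiv.refl _)
  map_rel_iff' := by
    rintro (u | p) (v | q)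
    · exact e.map_adj_iff
    · exact e.toEquiv.apply_eq_iff_eq
    · exact e.toEquiv.apply_eq_iff_eq
    · exact Iff.rfl

noncomputable def SimpleGraph.Iso.ofAttach (hG : ∀ v, ¬ G.IsIsolated v)
    (hH : ∀ w, ¬ H.IsIsolated w) (f : _root_.attach G ≃g _root_.attach H) : G ≃g H :=
  (attachInduceNonLeavesIso hG).symm.trans
    ((f.induce f.bijOn_nonLeaves).trans (attachInduceNonLeavesIso hH))

end Attach

/-- `T` can be recovered from `T'`: the non-leaf vertices of `T'` are
exactly the original vertices of `T`, and deleting all leaves of `T'` yields a tree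
isomorphic to `T`; consequently, for trees with at least two vertices,
`T₁ ≅ T₂ ↔ T₁' ≅ T₂'`. -/
theorem stmt_13 {V₁ V₂ : Type} [Fintype V₁] [Fintype V₂]
    (G₁ : SimpleGraph V₁) (G₂ : SimpleGraph V₂)
    (h₁ : G₁.IsTree) (h₂ : G₂.IsTree)
    (hc₁ : 2 ≤ Fintype.card V₁) (hc₂ : 2 ≤ Fintype.card V₂) :
    (∀ x, ((attach G₁).neighborSet x).ncard ≠ 1 ↔ ∃ v : V₁, x = Sum.inl v) ∧
    Nonempty ((attach G₁).induce {x | ((attach G₁).neighborSet x).ncard ≠ 1} ≃g G₁) ∧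
    (Nonempty (G₁ ≃g G₂) ↔ Nonempty (attach G₁ ≃g attach G₂)) := by
  have hG₁ := h₁.connected.not_isIsolated_of_two_le_card hc₁
  have hG₂ := h₂.connected.not_isIsolated_of_two_le_card hc₂
  exact ⟨mem_nonLeaves_attach_iff hG₁, ⟨attachInduceNonLeavesIso hG₁⟩,
    ⟨fun ⟨e⟩ => ⟨e.attach⟩, fun ⟨f⟩ => ⟨.ofAttach hG₁ hG₂ f⟩⟩⟩
end
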